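/- arXiv:2605.13410 — 2 statements merged into one kernel-verified Lean document; each statement's English description precedes it below -/
import Mathlib

section
/- Let 𝐏 ⊂ ℤ^n be a finite set with P = Conv(𝐏), and let D_1, …, D_n be daughter polytopes of 𝐏 that are semi-interlaced in 𝐏. Let S_1, S_2 ∈ Θ(P) be sutures such that S_1 ∩ S_2 ≠ ∅ and aff(S_1 ∩ S_2) = aff(S_1) ∩ aff(S_2). Then S_1 ∩ S_2 is a suture and P ∩ aff(S_1 ∪ S_2) is a suture. -/
open Pointwise Filter
open scoped Classical

noncomputable section

def intLattice (n : ℕ) : AddSubgroup (Fin n → ℝ) where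
  carrier := {x | ∀ i, ∃ m : ℤ, x i = (m : ℝ)}
  zero_mem' := fun i => ⟨0, by simp⟩
  add_mem' := by
    intro a b ha hb i
    obtain ⟨p, hp⟩ := ha i
    obtain ⟨q, hq⟩ := hb i
    exact ⟨p + q, by simp [hp, hq]⟩
  neg_mem' := by
    intro a ha i
    obtain ⟨p, hp⟩ := ha i
    exact ⟨-p, by simp [hp]⟩

/-- Lattice volume (normalized so that a unit simplex of the lattice `L` has
volume `1`) of a `k`-dimensional set `Q`, defined via asymptotic counting of
lattice points in dilations of `Q`. -/
def latVol {E : Type*} [AddCommGroup E] [Module ℝ E] (L : AddSubgroup E)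
    (k : ℕ) (Q : Set E) : ℝ :=
  Filter.limsup
    (fun t : ℕ => (Nat.factorial k : ℝ) *
      (Nat.card ↥(((t : ℝ) • Q) ∩ (L : Set E))) / (t : ℝ) ^ k) Filter.atTop

/-- Mixed volume of the polytopes `Q i`, `i ∈ T`, via inclusion-exclusion of
lattice volumes of Minkowski sums. -/
def mixedVol {E : Type*} [AddCommGroup E] [Module ℝ E] {ι : Type*}
    (L : AddSubgroup E) (T : Finset ι) (Q : ι → Set E) : ℝ :=
  ∑ I ∈ T.powerset,
    if I.Nonempty then
      (-1 : ℝ) ^ (T.card - I.card) * latVol L T.card (∑ i ∈ I, Q i)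
    else 0

/-- `F` is a face of `P`: the set of maximizers over `P` of some linear functional. -/
def IsFaceOf {E : Type*} [AddCommGroup E] [Module ℝ E] (P F : Set E) : Prop :=
  ∃ ξ : E →ₗ[ℝ] ℝ, F = {x ∈ P | ∀ y ∈ P, ξ y ≤ ξ x}

/-- Dimension of (the affine span of) a set. -/
def sdim {E : Type*} [AddCommGroup E] [Module ℝ E] (Q : Set E) : ℕ :=
  Module.finrank ℝ (vectorSpan ℝ Q)

/-- The family D-family: faces of `P` maximal among the faces disjoint from `D`. -/
def DFam {E : Type*} [AddCommGroup E] [Module ℝ E] (P D : Set E) : Set (Set E) :=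
  {F | Maximal (fun G => IsFaceOf P G ∧ G ∩ D = ∅) F}

/-- `D` is a daughter polytope of the finite set `A`. -/
def IsDaughter {E : Type*} [AddCommGroup E] [Module ℝ E] (A : Finset E) (D : Set E) : Prop :=
  D.Nonempty ∧
  (∀ F ∈ DFam (convexHull ℝ (A : Set E)) D, ∀ F' ∈ DFam (convexHull ℝ (A : Set E)) D,
    F ≠ F' → F ∩ F' = ∅) ∧
  D = convexHull ℝ ((A : Set E) \ ⋃ F ∈ DFam (convexHull ℝ (A : Set E)) D, F)

/-- The daughter polytopes `D i`, `i ∈ T`, are semi-interlaced in `A`. -/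
def SemiInterlaced {E : Type*} [AddCommGroup E] [Module ℝ E] {ι : Type*}
    (A : Finset E) (T : Finset ι) (D : ι → Set E) : Prop :=
  (∀ i ∈ T, IsDaughter A (D i)) ∧
  ∀ F, IsFaceOf (convexHull ℝ (A : Set E)) F →
    sdim F ≤ (T.filter fun i => (D i ∩ F).Nonempty).card

/-- A face `F` of `Conv A` is a suture if exactly `dim F` of the `D i` meet it. -/
def IsSuture {E : Type*} [AddCommGroup E] [Module ℝ E] {ι : Type*}
    (A : Finset E) (T : Finset ι) (D : ι → Set E) (F : Set E) : Prop :=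
  IsFaceOf (convexHull ℝ (A : Set E)) F ∧
  (T.filter fun i => (D i ∩ F).Nonempty).card = sdim F



section SutureHelpers

variable {E : Type*} [AddCommGroup E] [Module ℝ E]

lemma isFaceOf_self (P : Set E) : IsFaceOf P P :=
  ⟨0, by ext x; simp⟩

lemma IsFaceOf.subset' {P F : Set E} (h : IsFaceOf P F) : F ⊆ P := by
  obtain ⟨ξ, rfl⟩ := h; exact fun x hx => hx.1

lemma IsFaceOf.inter' {P F₁ F₂ : Set E} {z : E} (h₁ : IsFaceOf P F₁) (h₂ : IsFaceOf P F₂)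
    (hz₁ : z ∈ F₁) (hz₂ : z ∈ F₂) : IsFaceOf P (F₁ ∩ F₂) := by
  obtain ⟨ξ, rfl⟩ := h₁
  obtain ⟨η, rfl⟩ := h₂
  refine ⟨ξ + η, ?_⟩
  ext x
  simp only [Set.mem_inter_iff, Set.mem_setOf_eq, LinearMap.add_apply]
  constructor
  · rintro ⟨⟨hxP, hξ⟩, ⟨-, hη⟩⟩
    exact ⟨hxP, fun y hy => add_le_add (hξ y hy) (hη y hy)⟩
  · rintro ⟨hxP, hmax⟩
    have hzx := hmax z hz₁.1
    have h1 : ξ x ≤ ξ z := hz₁.2 x hxP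
    have h2 : η x ≤ η z := hz₂.2 x hxP
    have hξx : ξ x = ξ z := by linarith
    have hηx : η x = η z := by linarith
    exact ⟨⟨hxP, fun y hy => (hz₁.2 y hy).trans hξx.ge⟩,
           ⟨hxP, fun y hy => (hz₂.2 y hy).trans hηx.ge⟩⟩

lemma face_eq_hull0 (A : Finset E) {F : Set E}
    (hF : IsFaceOf (convexHull ℝ (A : Set E)) F) :
    F = convexHull ℝ ((A.filter (· ∈ F) : Finset E) : Set E) := by
  classical
  obtain ⟨ξ, hFdef⟩ := hF
  apply Set.Subset.antisymm
  · intro x hx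
    have hx' := hx
    rw [hFdef] at hx'
    obtain ⟨hxP, hxmax⟩ := hx'
    rw [Finset.convexHull_eq] at hxP
    obtain ⟨w, hw0, hw1, hwx⟩ := hxP
    have hA_le : ∀ a ∈ A, ξ a ≤ ξ x := fun a ha => hxmax a (subset_convexHull ℝ _ ha)
    have hξx : ξ x = ∑ a ∈ A, w a * ξ a := by
      conv_lhs => rw [← hwx, Finset.centerMass_eq_of_sum_1 _ _ hw1]
      rw [map_sum]
      exact Finset.sum_congr rfl fun a _ => by simp
    have hsum0 : ∑ a ∈ A, w a * (ξ x - ξ a) = 0 := by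
      have h : ∑ a ∈ A, w a * (ξ x - ξ a)
          = (∑ a ∈ A, w a) * ξ x - ∑ a ∈ A, w a * ξ a := by
        rw [Finset.sum_mul, ← Finset.sum_sub_distrib]
        exact Finset.sum_congr rfl fun a _ => by ring
      rw [h, hw1, one_mul, ← hξx, sub_self]
    have hzero := (Finset.sum_eq_zero_iff_of_nonneg
      (fun a ha => mul_nonneg (hw0 a ha) (sub_nonneg.mpr (hA_le a ha)))).mp hsum0
    have hmem : ∀ a ∈ A, w a ≠ 0 → a ∈ F := by
      intro a ha hwa
      have hξa : ξ a = ξ x := by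
        rcases mul_eq_zero.mp (hzero a ha) with h | h
        · exact absurd h hwa
        · linarith [sub_eq_zero.mp h]
      rw [hFdef]
      exact ⟨subset_convexHull ℝ _ ha, fun y hy => hξa ▸ hxmax y hy⟩
    rw [← hwx, ← Finset.centerMass_filter_ne_zero (w := w) id]
    refine Finset.centerMass_mem_convexHull _ (fun i hi => hw0 i (Finset.mem_filter.mp hi).1)
      ?_ (fun i hi => ?_)
    · rw [Finset.sum_filter_ne_zero, hw1]; norm_num
    · obtain ⟨hiA, hiw⟩ := Finset.mem_filter.mp hi
      exact Finset.mem_coe.mpr (Finset.mem_filter.mpr ⟨hiA, hmem i hiA hiw⟩)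
  · apply convexHull_min
    · intro a ha
      exact (Finset.mem_filter.mp (Finset.mem_coe.mp ha)).2
    · have hFeq : F = convexHull ℝ (A : Set E) ∩
          ⋂ y ∈ convexHull ℝ (A : Set E), {x | ξ y ≤ ξ x} := by
        rw [hFdef]; ext x; simp [Set.mem_iInter]
      rw [hFeq]
      exact (convex_convexHull ℝ _).inter
        (convex_iInter fun y => convex_iInter fun hy => convex_halfSpace_ge ξ.isLinear _)

/-- The vertices of `A` lying in `F`, with a pinned decidability instance. -/
def faceVerts (A : Finset E) (F : Set E) : Finset E := A.filter (· ∈ F)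

lemma mem_faceVerts {A : Finset E} {F : Set E} {a : E} :
    a ∈ faceVerts A F ↔ a ∈ A ∧ a ∈ F := Finset.mem_filter

lemma faceVerts_mono {A : Finset E} {F F' : Set E} (h : F ⊆ F') :
    faceVerts A F ⊆ faceVerts A F' := fun a ha => by
  rw [mem_faceVerts] at ha ⊢; exact ⟨ha.1, h ha.2⟩

lemma face_eq_hull (A : Finset E) {F : Set E}
    (hF : IsFaceOf (convexHull ℝ (A : Set E)) F) :
    F = convexHull ℝ ((faceVerts A F : Finset E) : Set E) := by
  unfold faceVerts
  exact face_eq_hull0 A hF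

lemma face_eq_inter_affineSpan {P F : Set E} (hF : IsFaceOf P F) (hne : F.Nonempty) :
    F = P ∩ (affineSpan ℝ F : Set E) := by
  obtain ⟨ξ, hFdef⟩ := hF
  obtain ⟨x₀, hx₀⟩ := hne
  have hx₀' := hx₀
  rw [hFdef] at hx₀'
  obtain ⟨hx₀P, hx₀max⟩ := hx₀'
  set S : AffineSubspace ℝ E :=
    { carrier := {x | ξ x = ξ x₀}
      smul_vsub_vadd_mem' := by
        intro c p₁ p₂ p₃ h₁ h₂ h₃
        simp only [Set.mem_setOf_eq] at h₁ h₂ h₃ ⊢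
        simp [vsub_eq_sub, vadd_eq_add, map_add, map_smul, map_sub, h₁, h₂, h₃] } with hS
  have hFS : F ⊆ (S : Set E) := by
    intro x hx
    rw [hFdef] at hx
    exact le_antisymm (hx₀max x hx.1) (hx.2 x₀ hx₀P)
  have hspan : affineSpan ℝ F ≤ S := affineSpan_le.mpr hFS
  apply Set.Subset.antisymm
  · intro x hx
    have hx' := hx; rw [hFdef] at hx'
    exact ⟨hx'.1, subset_affineSpan ℝ F hx⟩
  · rintro x ⟨hxP, hxaff⟩
    have hξx : ξ x = ξ x₀ := hspan hxaff
    rw [hFdef]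
    exact ⟨hxP, fun y hy => (hx₀max y hy).trans hξx.ge⟩

lemma exists_min_face (A : Finset E) {X : Set E} (hXP : X ⊆ convexHull ℝ (A : Set E))
    (hX : X.Nonempty) :
    ∃ F₀, IsFaceOf (convexHull ℝ (A : Set E)) F₀ ∧ X ⊆ F₀ ∧
      ∀ F, IsFaceOf (convexHull ℝ (A : Set E)) F → X ⊆ F → F₀ ⊆ F := by
  classical
  set P := convexHull ℝ (A : Set E) with hPdef
  set N : Set ℕ := {k | ∃ F, IsFaceOf P F ∧ X ⊆ F ∧ (faceVerts A F).card = k} with hN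
  have hNne : N.Nonempty := ⟨_, P, isFaceOf_self P, hXP, rfl⟩
  obtain ⟨F₀, hF₀, hXF₀, hcard⟩ := Nat.sInf_mem hNne
  obtain ⟨z, hz⟩ := hX
  refine ⟨F₀, hF₀, hXF₀, ?_⟩
  intro F hF hXF
  have hface : IsFaceOf P (F ∩ F₀) := hF.inter' hF₀ (hXF hz) (hXF₀ hz)
  have hmem : (faceVerts A (F ∩ F₀)).card ∈ N :=
    ⟨F ∩ F₀, hface, Set.subset_inter hXF hXF₀, rfl⟩
  have hsub : faceVerts A (F ∩ F₀) ⊆ faceVerts A F₀ :=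
    faceVerts_mono Set.inter_subset_right
  have hle : (faceVerts A F₀).card ≤ (faceVerts A (F ∩ F₀)).card :=
    hcard ▸ Nat.sInf_le hmem
  have heq := Finset.eq_of_subset_of_card_le hsub hle
  have : F₀ = F ∩ F₀ := by
    calc F₀ = convexHull ℝ ((faceVerts A F₀ : Finset E) : Set E) := face_eq_hull A hF₀
      _ = convexHull ℝ ((faceVerts A (F ∩ F₀) : Finset E) : Set E) := by rw [heq]
      _ = F ∩ F₀ := (face_eq_hull A hface).symm
  exact this.trans_subset Set.inter_subset_left

lemma exists_max_disjoint (A : Finset E) {D F : Set E}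
    (hF : IsFaceOf (convexHull ℝ (A : Set E)) F) (hdisj : F ∩ D = ∅) :
    ∃ G, G ∈ DFam (convexHull ℝ (A : Set E)) D ∧ F ⊆ G := by
  classical
  set P := convexHull ℝ (A : Set E) with hPdef
  set N : Set ℕ := {k | ∃ G, (IsFaceOf P G ∧ G ∩ D = ∅) ∧ F ⊆ G ∧
    (faceVerts A G).card = k} with hN
  have hNne : N.Nonempty := ⟨_, F, ⟨hF, hdisj⟩, subset_rfl, rfl⟩
  have hbdd : BddAbove N := ⟨A.card, by rintro k ⟨G, -, -, rfl⟩; exact Finset.card_filter_le _ _⟩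
  obtain ⟨G, hG, hFG, hcard⟩ := Nat.sSup_mem hNne hbdd
  refine ⟨G, ⟨hG, ?_⟩, hFG⟩
  intro G' hG' hsub
  have hmem : (faceVerts A G').card ∈ N := ⟨G', hG', hFG.trans hsub, rfl⟩
  have hle : (faceVerts A G').card ≤ (faceVerts A G).card :=
    hcard ▸ le_csSup hbdd hmem
  have hsubf : faceVerts A G ⊆ faceVerts A G' := faceVerts_mono hsub
  have heq := Finset.eq_of_subset_of_card_le hsubf hle
  have : G' = G := by
    calc G' = convexHull ℝ ((faceVerts A G' : Finset E) : Set E) := face_eq_hull A hG'.1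
      _ = convexHull ℝ ((faceVerts A G : Finset E) : Set E) := by rw [heq]
      _ = G := (face_eq_hull A hG.1).symm
  exact this.le

end SutureHelpers

/-- **Intersections and joins of sutures are sutures.**
If `S₁, S₂` are sutures of the semi-interlaced configuration with
`S₁ ∩ S₂ ≠ ∅` and `aff (S₁ ∩ S₂) = aff S₁ ⊓ aff S₂`, then `S₁ ∩ S₂` and
`P ∩ aff (S₁ ∪ S₂)` are sutures. -/
theorem suture_intersection_and_join (n : ℕ) (A : Finset (Fin n → ℝ))
    (hlat : ∀ p ∈ A, p ∈ intLattice n)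
    (P : Set (Fin n → ℝ)) (hP : P = convexHull ℝ (A : Set (Fin n → ℝ)))
    (D : Fin n → Set (Fin n → ℝ))
    (hsemi : SemiInterlaced A Finset.univ D)
    (S₁ S₂ : Set (Fin n → ℝ))
    (hS₁ : IsSuture A Finset.univ D S₁) (hS₂ : IsSuture A Finset.univ D S₂)
    (hne : (S₁ ∩ S₂).Nonempty)
    (haff : affineSpan ℝ (S₁ ∩ S₂) = affineSpan ℝ S₁ ⊓ affineSpan ℝ S₂) :
    IsSuture A Finset.univ D (S₁ ∩ S₂) ∧
    IsSuture A Finset.univ D (P ∩ (affineSpan ℝ (S₁ ∪ S₂) : Set (Fin n → ℝ))) := by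
  classical
  subst hP
  obtain ⟨z, hz₁, hz₂⟩ := hne
  obtain ⟨hS₁f, hS₁c⟩ := hS₁
  obtain ⟨hS₂f, hS₂c⟩ := hS₂
  have hfaceI : IsFaceOf (convexHull ℝ (A : Set (Fin n → ℝ))) (S₁ ∩ S₂) :=
    hS₁f.inter' hS₂f hz₁ hz₂
  have hXP : S₁ ∪ S₂ ⊆ convexHull ℝ (A : Set (Fin n → ℝ)) :=
    Set.union_subset hS₁f.subset' hS₂f.subset'
  obtain ⟨F₀, hF₀f, hXF₀, hF₀min⟩ := exists_min_face A hXP ⟨z, Or.inl hz₁⟩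
  -- every daughter meeting F₀ meets S₁ or S₂
  have hL2 : ∀ i : Fin n, (D i ∩ F₀).Nonempty →
      (D i ∩ S₁).Nonempty ∨ (D i ∩ S₂).Nonempty := by
    intro i hiF
    by_contra hcon
    push_neg at hcon
    obtain ⟨h1, h2⟩ := hcon
    have h1' : S₁ ∩ D i = ∅ := by rw [Set.inter_comm]; exact h1
    have h2' : S₂ ∩ D i = ∅ := by rw [Set.inter_comm]; exact h2
    obtain ⟨G₁, hG₁, hS₁G₁⟩ := exists_max_disjoint A hS₁f h1'
    obtain ⟨G₂, hG₂, hS₂G₂⟩ := exists_max_disjoint A hS₂f h2'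
    have hd := hsemi.1 i (Finset.mem_univ i)
    by_cases hGG : G₁ = G₂
    · subst hGG
      have hF₀G : F₀ ⊆ G₁ :=
        hF₀min G₁ hG₁.1.1 (Set.union_subset hS₁G₁ hS₂G₂)
      obtain ⟨x, hxD, hxF⟩ := hiF
      have : x ∈ G₁ ∩ D i := ⟨hF₀G hxF, hxD⟩
      rw [hG₁.1.2] at this
      exact this
    · have hdisj := hd.2.1 G₁ hG₁ G₂ hG₂ hGG
      have : z ∈ G₁ ∩ G₂ := ⟨hS₁G₁ hz₁, hS₂G₂ hz₂⟩
      rw [hdisj] at this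
      exact this
  -- dimension arithmetic
  have hz₁' : z ∈ affineSpan ℝ S₁ := subset_affineSpan ℝ S₁ hz₁
  have hz₂' : z ∈ affineSpan ℝ S₂ := subset_affineSpan ℝ S₂ hz₂
  set V₁ := (affineSpan ℝ S₁).direction with hV₁
  set V₂ := (affineSpan ℝ S₂).direction with hV₂
  have hdirinf : (affineSpan ℝ S₁ ⊓ affineSpan ℝ S₂).direction = V₁ ⊓ V₂ :=
    AffineSubspace.direction_inf_of_mem hz₁' hz₂'
  have hdirsup : (affineSpan ℝ S₁ ⊔ affineSpan ℝ S₂).direction = V₁ ⊔ V₂ := by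
    have h := AffineSubspace.direction_sup hz₁' hz₂'
    simpa using h
  have hsdI : sdim (S₁ ∩ S₂) = Module.finrank ℝ ↥(V₁ ⊓ V₂) := by
    rw [sdim, ← direction_affineSpan, haff, hdirinf]
  have hsd₁ : sdim S₁ = Module.finrank ℝ ↥V₁ := by
    rw [sdim, hV₁, direction_affineSpan]
  have hsd₂ : sdim S₂ = Module.finrank ℝ ↥V₂ := by
    rw [sdim, hV₂, direction_affineSpan]
  have hmod : Module.finrank ℝ ↥(V₁ ⊔ V₂) + sdim (S₁ ∩ S₂) = sdim S₁ + sdim S₂ := by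
    rw [hsdI, hsd₁, hsd₂]
    exact Submodule.finrank_sup_add_finrank_inf_eq V₁ V₂
  have hWdir : (affineSpan ℝ (S₁ ∪ S₂)).direction = V₁ ⊔ V₂ := by
    rw [AffineSubspace.span_union, hdirsup]
  have hspanle : affineSpan ℝ (S₁ ∪ S₂) ≤ affineSpan ℝ F₀ :=
    affineSpan_mono ℝ hXF₀
  have hj_le : Module.finrank ℝ ↥(V₁ ⊔ V₂) ≤ sdim F₀ := by
    rw [sdim, ← direction_affineSpan, ← hWdir]
    exact Submodule.finrank_mono (AffineSubspace.direction_le hspanle)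
  -- counting
  set T₁ := Finset.univ.filter (fun i : Fin n => (D i ∩ S₁).Nonempty) with hT₁
  set T₂ := Finset.univ.filter (fun i : Fin n => (D i ∩ S₂).Nonempty) with hT₂
  set TI := Finset.univ.filter (fun i : Fin n => (D i ∩ (S₁ ∩ S₂)).Nonempty) with hTI
  set TF := Finset.univ.filter (fun i : Fin n => (D i ∩ F₀).Nonempty) with hTF
  have hTIsub : TI ⊆ T₁ ∩ T₂ := by
    intro i hi
    rw [hTI, Finset.mem_filter] at hi
    obtain ⟨-, x, hxD, hx₁, hx₂⟩ := hi
    rw [Finset.mem_inter, hT₁, hT₂, Finset.mem_filter, Finset.mem_filter]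
    exact ⟨⟨Finset.mem_univ i, x, hxD, hx₁⟩, ⟨Finset.mem_univ i, x, hxD, hx₂⟩⟩
  have hTFeq : TF = T₁ ∪ T₂ := by
    ext i
    rw [hTF, Finset.mem_filter, Finset.mem_union, hT₁, hT₂,
      Finset.mem_filter, Finset.mem_filter]
    constructor
    · rintro ⟨-, hiF⟩
      rcases hL2 i hiF with h | h
      · exact Or.inl ⟨Finset.mem_univ i, h⟩
      · exact Or.inr ⟨Finset.mem_univ i, h⟩
    · rintro (⟨-, x, hxD, hx⟩ | ⟨-, x, hxD, hx⟩)
      · exact ⟨Finset.mem_univ i, x, hxD, hXF₀ (Or.inl hx)⟩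
      · exact ⟨Finset.mem_univ i, x, hxD, hXF₀ (Or.inr hx)⟩
  have hcards : TF.card + (T₁ ∩ T₂).card = sdim S₁ + sdim S₂ := by
    rw [hTFeq, Finset.card_union_add_card_inter, hS₁c, hS₂c]
  have hsemiI : sdim (S₁ ∩ S₂) ≤ TI.card := hsemi.2 _ hfaceI
  have hsemiF : sdim F₀ ≤ TF.card := hsemi.2 _ hF₀f
  have hTIle : TI.card ≤ (T₁ ∩ T₂).card := Finset.card_le_card hTIsub
  have key1 : TI.card = sdim (S₁ ∩ S₂) := by omega
  have key2 : TF.card = sdim F₀ := by omega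
  have key3 : sdim F₀ = Module.finrank ℝ ↥(V₁ ⊔ V₂) := by omega
  constructor
  · exact ⟨hfaceI, key1⟩
  · have hF₀ne : F₀.Nonempty := ⟨z, hXF₀ (Or.inl hz₁)⟩
    have hdir_eq : (affineSpan ℝ (S₁ ∪ S₂)).direction = (affineSpan ℝ F₀).direction := by
      refine Submodule.eq_of_le_of_finrank_eq (AffineSubspace.direction_le hspanle) ?_
      rw [hWdir, direction_affineSpan, ← sdim, key3]
    have hspan_eq : affineSpan ℝ (S₁ ∪ S₂) = affineSpan ℝ F₀ :=
      AffineSubspace.ext_of_direction_eq hdir_eq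
        ⟨z, subset_affineSpan ℝ _ (Or.inl hz₁), subset_affineSpan ℝ _ (hXF₀ (Or.inl hz₁))⟩
    have hset : convexHull ℝ (A : Set (Fin n → ℝ)) ∩
        (affineSpan ℝ (S₁ ∪ S₂) : Set (Fin n → ℝ)) = F₀ := by
      rw [hspan_eq]
      exact (face_eq_inter_affineSpan hF₀f hF₀ne).symm
    rw [hset]
    exact ⟨hF₀f, key2⟩


end
end

section
/- Let 𝐏 ⊂ ℤ^n be a finite set with P = Conv(𝐏), let D be a daughter polytope of 𝐏 with associated family 𝒟 = 𝒟(D), let W ∈ 𝒟, and let S be a face of P contained in W. Then for every W' ∈ 𝒟 ∖ {W}, the projection π_S(W') does not intersect the set 𝐏_S = π_S(𝐏) ∩ closure(π_S(P) ∖ π_S(Conv(𝐏 ∖ S))). -/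
/-!
Let `Q = Conv(𝐏 ∖ S)`; both `D` and `W'` lie in `Q`, since they avoid `W ⊇ S`. Suppose `π_S(w')`,
`w' ∈ W'`, is a limit of points of `π_S(P) ∖ π_S(Q)`. Separating such a point, close to `π_S(w')`,
from the polytope `π_S(Q)` at its nearest point exposes a face of `π_S(Q)` that comes close to
`π_S(w')`, hence contains it, because `π_S(Q)` has only finitely many faces and they are closed.
Pulled back to `ℝⁿ`, this gives a linear functional `θ` that on `Q ⊇ D ∪ W'` is maximal at `w'`
but exceeds `θ(w')` somewhere on `P`.

This is impossible. Write `W' = P^η`. The faces `P^(η + cθ)`, `c ≥ 0`, avoid `D`, and each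
contains those for nearby `c`; as `[0, ∞)` is connected and the members of `𝒟(D)` are disjoint,
all of them lie in `W'`, which fails for large `c`.
-/

open Pointwise Filter
open scoped Classical

noncomputable section

open Set Topology

section Faces

variable {E : Type*} [AddCommGroup E] [Module ℝ E]

/-- The face `P^φ` of `P`. -/
def exposedFace (P : Set E) (φ : E →ₗ[ℝ] ℝ) : Set E :=
  {x ∈ P | ∀ y ∈ P, φ y ≤ φ x}

theorem isFaceOf_exposedFace (P : Set E) (φ : E →ₗ[ℝ] ℝ) : IsFaceOf P (exposedFace P φ) :=
  ⟨φ, rfl⟩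

theorem LinearMap.le_of_mem_convexHull {s : Set E} (φ : E →ₗ[ℝ] ℝ) {c : ℝ}
    (h : ∀ a ∈ s, φ a ≤ c) {x : E} (hx : x ∈ convexHull ℝ s) : φ x ≤ c :=
  convexHull_min h (convex_halfSpace_le φ.isLinear c) hx

theorem exposedFace_convexHull (A : Finset E) (φ : E →ₗ[ℝ] ℝ) :
    exposedFace (convexHull ℝ (A : Set E)) φ = convexHull ℝ (exposedFace (A : Set E) φ) := by
  obtain hempty | ⟨a₀, ha₀, hmax⟩ := (exposedFace (A : Set E) φ).eq_empty_or_nonempty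
  · have hA : (A : Set E) = ∅ := by
      by_contra hA
      obtain ⟨a, ha, ha_max⟩ :=
        A.exists_max_image φ (Finset.coe_nonempty.1 (nonempty_iff_ne_empty.2 hA))
      exact hempty.subset ⟨ha, ha_max⟩
    simp [hA, exposedFace]
  set M := φ a₀
  have hle : ∀ x ∈ convexHull ℝ (A : Set E), φ x ≤ M := fun x => φ.le_of_mem_convexHull hmax
  apply Subset.antisymm
  · -- a proper convex combination attains `M` only if both of its endpoints do
    suffices h : convexHull ℝ (A : Set E) ⊆
        {x | φ x ≤ M ∧ (M ≤ φ x → x ∈ convexHull ℝ (exposedFace (A : Set E) φ))} from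
      fun x hx => (h hx.1).2 (hx.2 a₀ (subset_convexHull ℝ _ ha₀))
    refine convexHull_min (fun a ha => ⟨hmax a ha, fun hMa =>
      subset_convexHull ℝ _ ⟨ha, fun b hb => (hmax b hb).trans hMa⟩⟩) ?_
    rintro x ⟨hxM, hx⟩ y ⟨hyM, hy⟩ a b ha hb hab
    have hz : φ (a • x + b • y) = a * φ x + b * φ y := by simp
    have hM : a * M + b * M = M := by rw [← add_mul, hab, one_mul]
    refine ⟨by rw [hz]; linarith [mul_le_mul_of_nonneg_left hxM ha,
      mul_le_mul_of_nonneg_left hyM hb], fun hMz => ?_⟩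
    rcases ha.eq_or_lt with rfl | ha
    · obtain rfl : b = 1 := by simpa using hab
      simpa using hy (by simpa using hMz)
    rcases hb.eq_or_lt with rfl | hb
    · obtain rfl : a = 1 := by simpa using hab
      simpa using hx (by simpa using hMz)
    rw [hz] at hMz
    refine convex_convexHull ℝ _ (hx ?_) (hy ?_) ha.le hb.le hab <;> by_contra! hlt
    · linarith [mul_lt_mul_of_pos_left hlt ha, mul_le_mul_of_nonneg_left hyM hb.le]
    · linarith [mul_lt_mul_of_pos_left hlt hb, mul_le_mul_of_nonneg_left hxM ha.le]
  · intro x hx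
    refine ⟨convexHull_mono (sep_subset _ _) hx, fun y hy => (hle y hy).trans ?_⟩
    exact convexHull_min (fun a ha => ha.2 a₀ ha₀) (convex_halfSpace_ge φ.isLinear _) hx

theorem exposedFace_convexHull_nonempty {A : Finset E} (hA : A.Nonempty) (φ : E →ₗ[ℝ] ℝ) :
    (exposedFace (convexHull ℝ (A : Set E)) φ).Nonempty := by
  obtain ⟨a, ha, hmax⟩ := A.exists_max_image φ hA
  rw [exposedFace_convexHull]
  exact ⟨a, subset_convexHull ℝ _ ⟨ha, hmax⟩⟩

theorem IsFaceOf.eq_convexHull_inter {A : Finset E} {F : Set E}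
    (hF : IsFaceOf (convexHull ℝ (A : Set E)) F) : F = convexHull ℝ ((A : Set E) ∩ F) := by
  obtain ⟨φ, rfl⟩ := hF
  change exposedFace _ φ = convexHull ℝ (_ ∩ exposedFace _ φ)
  nth_rewrite 1 [exposedFace_convexHull]
  congr 1
  ext a
  refine ⟨fun ⟨ha, hmax⟩ =>
      ⟨ha, subset_convexHull ℝ _ ha, fun y hy => φ.le_of_mem_convexHull hmax hy⟩,
    fun ⟨ha, _, hmax⟩ => ⟨ha, fun b hb => hmax b (subset_convexHull ℝ _ hb)⟩⟩

theorem finite_setOf_isFaceOf (A : Finset E) :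
    {F | IsFaceOf (convexHull ℝ (A : Set E)) F}.Finite :=
  (A.finite_toSet.finite_subsets.image (convexHull ℝ)).subset fun _ hF =>
    ⟨_, inter_subset_left, hF.eq_convexHull_inter.symm⟩

theorem eventually_exposedFace_subset {X : Type*} [TopologicalSpace X] (A : Finset E)
    {φ : X → E →ₗ[ℝ] ℝ} (hφ : ∀ a, Continuous fun c => φ c a) (c₀ : X) :
    ∀ᶠ c in 𝓝 c₀, exposedFace (convexHull ℝ (A : Set E)) (φ c) ⊆
      exposedFace (convexHull ℝ (A : Set E)) (φ c₀) := by
  have hvert : ∀ᶠ c in 𝓝 c₀, ∀ a ∈ A,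
      a ∈ exposedFace (A : Set E) (φ c) → a ∈ exposedFace (A : Set E) (φ c₀) := by
    refine (eventually_all_finset A).2 fun a ha => ?_
    by_cases hmax : a ∈ exposedFace (A : Set E) (φ c₀)
    · exact Eventually.of_forall fun _ _ => hmax
    obtain ⟨b, hb, hlt⟩ : ∃ b ∈ A, φ c₀ a < φ c₀ b := by
      simpa [exposedFace, ha] using hmax
    filter_upwards [(hφ a).continuousAt.eventually_lt (hφ b).continuousAt hlt] with c hc hac
    exact absurd (hac.2 b hb) hc.not_ge
  filter_upwards [hvert] with c hc
  simp only [exposedFace_convexHull]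
  exact convexHull_mono fun a ha => hc a ha.1 ha

end Faces

section DaughterFaces

variable {E : Type*} [AddCommGroup E] [Module ℝ E] {A : Finset E} {D : Set E}

theorem exists_mem_dFam_superset {G : Set E} (hG : IsFaceOf (convexHull ℝ (A : Set E)) G)
    (hGD : G ∩ D = ∅) : ∃ U ∈ DFam (convexHull ℝ (A : Set E)) D, G ⊆ U := by
  obtain ⟨U, hGU, hU⟩ := ((finite_setOf_isFaceOf A).subset fun F hF => hF.1).exists_le_maximal
    (show G ∈ {F | IsFaceOf (convexHull ℝ (A : Set E)) F ∧ F ∩ D = ∅} from ⟨hG, hGD⟩)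
  exact ⟨U, hU, hGU⟩

theorem subset_of_mem_dFam_of_inter_nonempty
    (hdisj : (DFam (convexHull ℝ (A : Set E)) D).PairwiseDisjoint id) {W G : Set E}
    (hW : W ∈ DFam (convexHull ℝ (A : Set E)) D) (hG : IsFaceOf (convexHull ℝ (A : Set E)) G)
    (hGD : G ∩ D = ∅) (hGW : (G ∩ W).Nonempty) : G ⊆ W := by
  obtain ⟨U, hU, hGU⟩ := exists_mem_dFam_superset hG hGD
  obtain rfl : U = W := hdisj.elim hU hW
    (not_disjoint_iff_nonempty_inter.2 (hGW.mono (inter_subset_inter_left W hGU)))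
  exact hGU

theorem isMaxOn_convexHull_of_isMaxOn_union
    (hdisj : (DFam (convexHull ℝ (A : Set E)) D).PairwiseDisjoint id) {W : Set E}
    (hW : W ∈ DFam (convexHull ℝ (A : Set E)) D) {w : E} (hw : w ∈ W) {θ : E →ₗ[ℝ] ℝ}
    (hθ : IsMaxOn θ (D ∪ W) w) : IsMaxOn θ (convexHull ℝ (A : Set E)) w := by
  set P := convexHull ℝ (A : Set E)
  obtain ⟨⟨η, hη⟩, hWD⟩ := hW.1
  change W = exposedFace P η at hη
  set F : ℝ → Set E := fun c => exposedFace P (η + c • θ)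
  have hF0 : F 0 = W := by simp [F, hη]
  have hFne : ∀ c, (F c).Nonempty := fun c => exposedFace_convexHull_nonempty
    (Finset.coe_nonempty.1 (convexHull_nonempty_iff.1 ⟨w, (hη ▸ hw).1⟩)) _
  have hwη : w ∈ exposedFace P η := hη ▸ hw
  -- `θ ≤ θ w` on `D`, so a point of `D` maximizing `η + c • θ` would maximize `η`, i.e. lie in `W`
  have hFD : ∀ c, 0 ≤ c → F c ∩ D = ∅ := by
    refine fun c hc => eq_empty_iff_forall_notMem.2 fun d ⟨hdF, hdD⟩ => ?_
    have hwd : η w + c * θ w ≤ η d + c * θ d := by simpa using hdF.2 w hwη.1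
    have hdw : c * θ d ≤ c * θ w := mul_le_mul_of_nonneg_left (isMaxOn_iff.1 hθ d (.inl hdD)) hc
    have hdW : d ∈ W := hη ▸ ⟨hdF.1, fun y hy => (hwη.2 y hy).trans (by linarith)⟩
    exact hWD.subset ⟨hdW, hdD⟩
  have hFW : ∀ c, 0 ≤ c → F c ⊆ W := by
    have hcont (a : E) : Continuous fun c : ℝ => (η + c • θ) a := by
      simp only [LinearMap.add_apply, LinearMap.smul_apply, smul_eq_mul]
      fun_prop
    refine fun c hc => (isPreconnected_Ici.induction₂' (fun c c' => F c ⊆ W ↔ F c' ⊆ W)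
      (fun c₀ hc₀ => ?_) (fun _ _ _ _ _ _ h h' => h.trans h') self_mem_Ici hc).1 hF0.le
    filter_upwards [nhdsWithin_le_nhds (eventually_exposedFace_subset A hcont c₀)]
      with c hsub
    have h : F c ⊆ W ↔ F c₀ ⊆ W := ⟨fun h => subset_of_mem_dFam_of_inter_nonempty hdisj hW
      (isFaceOf_exposedFace _ _) (hFD c₀ hc₀) ((hFne c).mono (subset_inter hsub h)),
      hsub.trans⟩
    exact ⟨h.symm, h⟩
  refine isMaxOn_iff.2 fun p hp => ?_
  by_contra! hlt
  -- for `c` this large, `η + c • θ` prefers `p` to every point of `W`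
  set c := (η w - η p) / (θ p - θ w) + 1 with hc_def
  have hc : c * (θ p - θ w) = η w - η p + (θ p - θ w) := by
    rw [hc_def]
    field_simp [(sub_pos.2 hlt).ne']
  have hc0 : 0 ≤ c :=
    add_nonneg (div_nonneg (sub_nonneg.2 (hwη.2 p hp)) (sub_pos.2 hlt).le) zero_le_one
  obtain ⟨x, hx⟩ := hFne c
  have hpx : η p + c * θ p ≤ η x + c * θ x := by simpa using hx.2 p hp
  have hxw : c * θ x ≤ c * θ w :=
    mul_le_mul_of_nonneg_left (isMaxOn_iff.1 hθ x (.inr (hFW c hc0 hx))) hc0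
  linarith [hwη.2 x hx.1]

end DaughterFaces

section Separation

variable {V : Type*} [NormedAddCommGroup V] [NormedSpace ℝ V]

theorem eventually_isFaceOf_mem_imp_mem (G : Finset V) (q : V) :
    ∀ᶠ z in 𝓝 q, ∀ F, IsFaceOf (convexHull ℝ (G : Set V)) F → z ∈ F → q ∈ F := by
  suffices h : ∀ F ∈ {F | IsFaceOf (convexHull ℝ (G : Set V)) F}, ∀ᶠ z in 𝓝 q, z ∈ F → q ∈ F from
    (eventually_all_finite (finite_setOf_isFaceOf G)).2 h
  intro F hF
  by_cases hqF : q ∈ F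
  · exact Eventually.of_forall fun _ _ => hqF
  have hFc : IsClosed F := by
    rw [IsFaceOf.eq_convexHull_inter hF]
    exact ((G.finite_toSet.inter_of_left F).isCompact_convexHull ℝ).isClosed
  filter_upwards [hFc.isOpen_compl.mem_nhds hqF] with z hz hzF using absurd hzF hz

theorem IsCompact.exists_isMaxOn_lt_of_notMem {K : Set V} (hK : IsCompact K) (hKc : Convex ℝ K)
    (hne : K.Nonempty) {y : V} (hy : y ∉ K) :
    ∃ z ∈ K, (∀ x ∈ K, dist y z ≤ dist y x) ∧ ∃ f : StrongDual ℝ V, IsMaxOn f K z ∧ f z < f y := by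
  obtain ⟨z, hzK, hz⟩ := hK.exists_infDist_eq_dist hne y
  have hnear : ∀ x ∈ K, dist y z ≤ dist y x := fun x hx => hz ▸ Metric.infDist_le_dist_of_mem hx
  have hr : 0 < dist y z := dist_pos.2 fun h => hy (h ▸ hzK)
  have hdisj : Disjoint (Metric.ball y (dist y z)) K := disjoint_left.2 fun x hx hxK =>
    (hnear x hxK).not_gt (by rwa [Metric.mem_ball, dist_comm] at hx)
  obtain ⟨f, u, hball, hKu⟩ :=
    geometric_hahn_banach_open (convex_ball y _) Metric.isOpen_ball hKc hdisj
  have hfz : f z ≤ u := by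
    have hcl : closure (Metric.ball y (dist y z)) ⊆ {a | f a ≤ u} :=
      closure_minimal (fun a ha => (hball a ha).le) (isClosed_le f.continuous continuous_const)
    exact hcl (by rw [closure_ball y hr.ne']; exact Metric.mem_closedBall.2 (dist_comm z y).le)
  refine ⟨z, hzK, hnear, -f, isMaxOn_iff.2 fun x hx => ?_, ?_⟩
  · simpa using hfz.trans (hKu x hx)
  · simpa using (hball y (Metric.mem_ball_self hr)).trans_le (hKu z hzK)

theorem exists_isMaxOn_lt_of_mem_closure_diff (G : Finset V) {P : Set V} {q : V}
    (hq : q ∈ convexHull ℝ (G : Set V)) (hcl : q ∈ closure (P \ convexHull ℝ (G : Set V))) :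
    ∃ f : StrongDual ℝ V, IsMaxOn f (convexHull ℝ (G : Set V)) q ∧ ∃ p ∈ P, f q < f p := by
  obtain ⟨ε, hε, hfaces⟩ := Metric.eventually_nhds_iff.1 (eventually_isFaceOf_mem_imp_mem G q)
  obtain ⟨y, ⟨hyP, hyQ⟩, hqy⟩ := Metric.mem_closure_iff.1 hcl (ε / 2) (half_pos hε)
  obtain ⟨z, hzQ, hnear, f, hfz, hfy⟩ :=
    (G.finite_toSet.isCompact_convexHull ℝ).exists_isMaxOn_lt_of_notMem
      (convex_convexHull ℝ _) ⟨q, hq⟩ hyQ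
  have hzq : dist z q < ε := by
    linarith [dist_triangle z y q, dist_comm z y, dist_comm y q, hnear q hq]
  -- the face exposed by `f` passes through `z`, which is `ε`-close to `q`, hence through `q`
  have hqmax : q ∈ exposedFace (convexHull ℝ (G : Set V)) f :=
    hfaces hzq _ (isFaceOf_exposedFace _ _) ⟨hzQ, isMaxOn_iff.1 hfz⟩
  exact ⟨f, isMaxOn_iff.2 hqmax.2, y, hyP, (isMaxOn_iff.1 hfz q hq).trans_lt hfy⟩

end Separation

theorem daughter_projection_avoids_general (n : ℕ) (A : Finset (Fin n → ℝ))
    (P : Set (Fin n → ℝ)) (hP : P = convexHull ℝ (A : Set (Fin n → ℝ)))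
    (D : Set (Fin n → ℝ)) (hD : IsDaughter A D)
    (W : Set (Fin n → ℝ)) (hW : W ∈ DFam P D)
    (S : Set (Fin n → ℝ)) (hSW : S ⊆ W) :
    ∀ W' ∈ DFam P D, W' ≠ W →
      ((vectorSpan ℝ S).mkQ '' W') ∩
        (((vectorSpan ℝ S).mkQ '' (A : Set (Fin n → ℝ))) ∩
          closure (((vectorSpan ℝ S).mkQ '' P) \
            ((vectorSpan ℝ S).mkQ '' convexHull ℝ ((A : Set (Fin n → ℝ)) \ S)))) = ∅ := by
  subst hP
  intro W' hW' hne
  set π := (vectorSpan ℝ S).mkQ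
  set Q := convexHull ℝ ((A : Set (Fin n → ℝ)) \ S)
  have hdisj : (DFam (convexHull ℝ (A : Set (Fin n → ℝ))) D).PairwiseDisjoint id :=
    fun F hF F' hF' h => disjoint_iff_inter_eq_empty.2 (hD.2.1 F hF F' hF' h)
  have hW'Q : W' ⊆ Q := by
    have hSW' : Disjoint S W' := (hdisj hW hW' hne.symm).mono_left hSW
    rw [hW'.1.1.eq_convexHull_inter]
    exact convexHull_mono fun a ha => ⟨ha.1, fun haS => hSW'.ne_of_mem haS ha.2 rfl⟩
  have hDQ : D ⊆ Q := by
    rw [hD.2.2]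
    exact convexHull_mono
      (sdiff_subset_sdiff_right (hSW.trans (subset_biUnion_of_mem (u := id) hW)))
  have hπQ : π '' Q = convexHull ℝ ↑((A.filter (· ∉ S)).image π) := by
    rw [LinearMap.image_convexHull, Finset.coe_image, Finset.coe_filter]
    rfl
  refine eq_empty_iff_forall_notMem.2 ?_
  rintro _ ⟨⟨w', hw', rfl⟩, -, hcl⟩
  -- the quotient norm is only available for a closed subspace
  have : IsClosed (vectorSpan ℝ S : Set (Fin n → ℝ)) := Submodule.closed_of_finiteDimensional _
  rw [hπQ] at hcl
  obtain ⟨f, hfmax, _, ⟨p, hp, rfl⟩, hlt⟩ :=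
    exists_isMaxOn_lt_of_mem_closure_diff _ (hπQ ▸ mem_image_of_mem π (hW'Q hw')) hcl
  have hθQ : IsMaxOn ((f : _ →ₗ[ℝ] ℝ) ∘ₗ π) Q w' :=
    isMaxOn_iff.2 fun x hx => isMaxOn_iff.1 hfmax _ (hπQ ▸ mem_image_of_mem π hx)
  have hθP := isMaxOn_convexHull_of_isMaxOn_union hdisj hW' hw'
    (hθQ.on_subset (union_subset hDQ hW'Q))
  exact (isMaxOn_iff.1 hθP p hp).not_gt hlt

/-- **Projections of the other maximal faces avoid `A_S` (Lemma "formal").**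
Let `D` be a daughter polytope of `A`, `W ∈ 𝒟(D)`, and `S ⊆ W` a face of
`P = Conv A`. Then for every `W' ∈ 𝒟(D)` with `W' ≠ W`, the projection
`π_S(W')` does not meet `A_S = π_S(A) ∩ closure (π_S(P) ∖ π_S(Conv (A ∖ S)))`. -/
theorem daughter_projection_avoids (n : ℕ) (A : Finset (Fin n → ℝ))
    (hlat : ∀ p ∈ A, p ∈ intLattice n)
    (P : Set (Fin n → ℝ)) (hP : P = convexHull ℝ (A : Set (Fin n → ℝ)))
    (D : Set (Fin n → ℝ)) (hD : IsDaughter A D)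
    (W : Set (Fin n → ℝ)) (hW : W ∈ DFam P D)
    (S : Set (Fin n → ℝ)) (hS : IsFaceOf P S) (hSW : S ⊆ W) :
    ∀ W' ∈ DFam P D, W' ≠ W →
      ((vectorSpan ℝ S).mkQ '' W') ∩
        (((vectorSpan ℝ S).mkQ '' (A : Set (Fin n → ℝ))) ∩
          closure (((vectorSpan ℝ S).mkQ '' P) \
            ((vectorSpan ℝ S).mkQ '' convexHull ℝ ((A : Set (Fin n → ℝ)) \ S)))) = ∅ :=
  daughter_projection_avoids_general n A P hP D hD W hW S hSW

end
end
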